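/- For the vertex ordering on T⧄P that compares (A,i) and (B,j) first by i, then by |A|, then lexicographically, the set of vertical edges {(A+v,i)∼(A,i)} satisfies the FIFO property: if (a,b) and (c,d) are vertical edges written with a<b, c<d, and a<c, then b<d. In particular, no two vertical edges nest under this ordering. -/
import Mathlib


/-- Vertices of `T ⧄ P`: a tree node indexed by an integer array, together with
a path position. -/
abbrev TPv := List ℕ × ℕ

/-- The explicit vertex ordering on `T ⧄ P`: compare first by path position,
then by depth, then lexicographically on the index arrays. -/
def vOrd (p q : TPv) : Prop :=
  p.2 < q.2 ∨ (p.2 = q.2 ∧ (p.1.length < q.1.length ∨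
    (p.1.length = q.1.length ∧ List.Lex (· < ·) p.1 q.1)))

/-- `x` lies strictly between `a` and `b` in the ordering. -/
def vBetween (x a b : TPv) : Prop := (vOrd a x ∧ vOrd x b) ∨ (vOrd b x ∧ vOrd x a)

/-- Edges `{a,b}` and `{c,d}` nest: one edge's endpoints both lie strictly
between the other edge's endpoints. -/
def Nests (a b c d : TPv) : Prop :=
  (vBetween c a b ∧ vBetween d a b) ∨ (vBetween a c d ∧ vBetween b c d)

lemma lexApp {v w : ℕ} : ∀ {A B : List ℕ},
    List.Lex (· < ·) A B → A.length = B.length →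
    List.Lex (· < ·) (A ++ [v]) (B ++ [w]) := by
  intro A B h
  induction h with
  | nil => intro hlen; simp at hlen
  | rel h => intro _; exact List.Lex.rel h
  | cons h ih => intro hlen; exact List.Lex.cons (ih (by simpa using hlen))

lemma lexAsymm : ∀ {X Y : List ℕ},
    List.Lex (· < ·) X Y → List.Lex (· < ·) Y X → False := by
  intro X Y h
  induction h with
  | nil =>
    intro h2; cases h2
  | rel h =>
    intro h2
    cases h2 with
    | rel h' => exact absurd h' (lt_asymm h)
    | cons _ => exact lt_irrefl _ h
  | cons h ih =>
    intro h2
    cases h2 with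
    | rel h' => exact lt_irrefl _ h'
    | cons h' => exact ih h'

lemma lexTrans : ∀ {X Y Z : List ℕ},
    List.Lex (· < ·) X Y → List.Lex (· < ·) Y Z → List.Lex (· < ·) X Z := by
  intro X Y Z h
  induction h generalizing Z with
  | nil =>
    intro h2; cases h2 <;> exact List.Lex.nil
  | rel h =>
    intro h2
    cases h2 with
    | rel h' => exact List.Lex.rel (h.trans h')
    | cons _ => exact List.Lex.rel h
  | cons h ih =>
    intro h2
    cases h2 with
    | rel h' => exact List.Lex.rel h'
    | cons h' => exact List.Lex.cons (ih h')

lemma vOrd_trans {p q r : TPv} (h1 : vOrd p q) (h2 : vOrd q r) : vOrd p r := by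
  unfold vOrd at *
  rcases h1 with h1 | ⟨e1, h1⟩ <;> rcases h2 with h2 | ⟨e2, h2⟩
  · exact Or.inl (h1.trans h2)
  · exact Or.inl (by omega)
  · exact Or.inl (by omega)
  · refine Or.inr ⟨e1.trans e2, ?_⟩
    rcases h1 with h1 | ⟨l1, x1⟩ <;> rcases h2 with h2 | ⟨l2, x2⟩
    · exact Or.inl (h1.trans h2)
    · exact Or.inl (by omega)
    · exact Or.inl (by omega)
    · exact Or.inr ⟨l1.trans l2, lexTrans x1 x2⟩

lemma vOrd_asymm {p q : TPv} (h1 : vOrd p q) (h2 : vOrd q p) : False := by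
  unfold vOrd at *
  rcases h1 with h1 | ⟨e1, h1⟩ <;> rcases h2 with h2 | ⟨e2, h2⟩
  · omega
  · omega
  · omega
  · rcases h1 with h1 | ⟨l1, x1⟩ <;> rcases h2 with h2 | ⟨l2, x2⟩
    · omega
    · omega
    · omega
    · exact lexAsymm x1 x2

lemma vStep (A : List ℕ) (v i : ℕ) : vOrd (A, i) (A ++ [v], i) :=
  Or.inr ⟨rfl, Or.inl (by simp)⟩

lemma fifo (A B : List ℕ) (v w i j : ℕ) (h : vOrd (A, i) (B, j)) :
    vOrd (A ++ [v], i) (B ++ [w], j) := by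
  unfold vOrd at *
  rcases h with h | ⟨hij, h⟩
  · exact Or.inl h
  · refine Or.inr ⟨hij, ?_⟩
    rcases h with h | ⟨hlen, hlex⟩
    · left; simpa using h
    · right; exact ⟨by simp [hlen], lexApp hlex hlen⟩

lemma between_res {x a b : TPv} (hab : vOrd a b) (h : vBetween x a b) :
    vOrd a x ∧ vOrd x b := by
  rcases h with h | ⟨h1, h2⟩
  · exact h
  · exact (vOrd_asymm hab (vOrd_trans h1 h2)).elim

/-- The vertical edges of `T ⧄ P` satisfy the FIFO property under the explicit
ordering: writing a vertical edge with its smaller endpoint `(A,i)` first, if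
`(A,i) < (B,j)` then `(A+v,i) < (B+w,j)`. In particular, no two vertical edges
(with no shared endpoints) nest. -/
theorem stmt17 :
    (∀ (A B : List ℕ) (v w i j : ℕ),
      vOrd (A, i) (B, j) → vOrd (A ++ [v], i) (B ++ [w], j)) ∧
    (∀ (A B : List ℕ) (v w i j : ℕ),
      ((A, i) : TPv) ≠ (B, j) → ((A, i) : TPv) ≠ (B ++ [w], j) →
      (A ++ [v], i) ≠ ((B, j) : TPv) → (A ++ [v], i) ≠ ((B ++ [w], j) : TPv) →
      ¬ Nests (A, i) (A ++ [v], i) (B, j) (B ++ [w], j)) := by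
  constructor
  · exact fifo
  · intro A B v w i j _ _ _ _ hN
    rcases hN with ⟨hc, hd⟩ | ⟨ha, hb⟩
    · obtain ⟨h1, -⟩ := between_res (vStep A v i) hc
      obtain ⟨-, h4⟩ := between_res (vStep A v i) hd
      exact vOrd_asymm (fifo A B v w i j h1) h4
    · obtain ⟨h1, -⟩ := between_res (vStep B w j) ha
      obtain ⟨-, h4⟩ := between_res (vStep B w j) hb
      exact vOrd_asymm (fifo B A w v j i h1) h4
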